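/- Let (Ω, P) be a probability space and X, Y : Ω → ℝ be independent random variables with Measure.map X P = gaussianReal m_X (σ_X²) and Measure.map Y P = gaussianReal m_Y (σ_Y²), where σ_X > 0 and σ_Y > 0. Set ρ_X = m_X/σ_X, ρ_Y = m_Y/σ_Y, σ_Z = √(1 + ρ_X² + ρ_Y²), and let Z̃ = (X·Y/(σ_X·σ_Y) − ρ_X·ρ_Y)/σ_Z. Then for every real t with |t| < σ_Z, writing α = t/σ_Z, mgf Z̃ P t = exp( ((ρ_X² + ρ_Y²)·α² + 2·ρ_X·ρ_Y·α³) / (2·(1 − α²)) ) / √(1 − α²). -/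

import Mathlib

/-!
Conditionally on `X = x`, the Gaussian moment generating function of `Y` gives
`E[exp (c x Y)] = exp (c mY x + c² vY x² / 2)`, so `E[exp (c X Y)]` is the integral of the
exponential of a quadratic in `x` against the density of `X`, computed by completing the square;
it is finite when `c² vX vY < 1`. The standardized product is an affine function of `X Y`,
and with `c = α / (σX σY)` that condition reads `α² < 1`.
-/

open MeasureTheory ProbabilityTheory Real
open scoped NNReal

lemma integral_exp_neg_mul_sq_add {b : ℝ} (hb : 0 < b) (c d : ℝ) :
    ∫ x, exp (-b * x ^ 2 + c * x + d) = √(π / b) * exp (c ^ 2 / (4 * b) + d) := by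
  have hsq (x : ℝ) : -b * x ^ 2 + c * x + d
      = -b * (x + -(c / (2 * b))) ^ 2 + (c ^ 2 / (4 * b) + d) := by
    field_simp
    ring
  simp_rw [hsq, exp_add, integral_mul_const,
    integral_add_right_eq_self (fun x => exp (-b * x ^ 2)), integral_gaussian]

lemma integral_exp_quadratic_gaussianReal (m : ℝ) (v : ℝ≥0) {b : ℝ} (hb : 2 * b * v < 1)
    (a : ℝ) :
    ∫ x, exp (b * x ^ 2 + a * x) ∂gaussianReal m v
      = exp ((b * m ^ 2 + a * m + a ^ 2 * v / 2) / (1 - 2 * b * v)) / √(1 - 2 * b * v) := by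
  rcases eq_or_ne v 0 with rfl | hv
  · simp [gaussianReal_zero_var]
  have hv0 : (0 : ℝ) < v := by positivity
  have hw : 0 < 1 - 2 * b * v := by linarith
  have hB : 0 < (1 - 2 * b * v) / (2 * v) := by positivity
  have hdensity (x : ℝ) : gaussianPDFReal m v x * exp (b * x ^ 2 + a * x)
      = (√(2 * π * v))⁻¹ * exp (-((1 - 2 * b * v) / (2 * v)) * x ^ 2 + (a + m / v) * x
          + -m ^ 2 / (2 * v)) := by
    rw [gaussianPDFReal, mul_assoc, ← exp_add]
    congr 2
    field_simp
    ring
  simp_rw [integral_gaussianReal_eq_integral_smul hv, smul_eq_mul, hdensity, integral_const_mul,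
    integral_exp_neg_mul_sq_add hB]
  have hscale : π / ((1 - 2 * b * v) / (2 * v)) = 2 * π * v / (1 - 2 * b * v) := by
    field_simp
  rw [hscale, sqrt_div (by positivity), ← mul_assoc, inv_mul_eq_div,
    div_div_cancel_left' (by positivity), inv_mul_eq_div]
  congr 2
  rw [div_add_div _ _ (by positivity) (by positivity), div_eq_div_iff (by positivity) hw.ne']
  field_simp
  ring

lemma integrable_exp_quadratic_gaussianReal (m : ℝ) (v : ℝ≥0) {b : ℝ} (hb : 2 * b * v < 1)
    (a : ℝ) : Integrable (fun x => exp (b * x ^ 2 + a * x)) (gaussianReal m v) :=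
  .of_integral_ne_zero <| by
    rw [integral_exp_quadratic_gaussianReal m v hb]
    exact (div_pos (exp_pos _) (sqrt_pos.2 (by linarith))).ne'

lemma integral_exp_mul_mul_gaussianReal_prod (mX mY : ℝ) (vX vY : ℝ≥0) {c : ℝ}
    (hc : c ^ 2 * vX * vY < 1) :
    ∫ p : ℝ × ℝ, exp (c * p.1 * p.2) ∂(gaussianReal mX vX).prod (gaussianReal mY vY)
      = exp ((c * mX * mY + c ^ 2 * (mX ^ 2 * vY + mY ^ 2 * vX) / 2) / (1 - c ^ 2 * vX * vY))
        / √(1 - c ^ 2 * vX * vY) := by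
  have hinner (x : ℝ) : ∫ y, exp (c * x * y) ∂gaussianReal mY vY
      = exp (vY * c ^ 2 / 2 * x ^ 2 + c * mY * x) := by
    rw [← mgf, mgf_gaussianReal (Measure.map_id' (μ := gaussianReal mY vY))]
    ring_nf
  have hvar : 2 * (vY * c ^ 2 / 2) * vX = c ^ 2 * vX * vY := by ring
  have hintegrable : Integrable (fun p : ℝ × ℝ => exp (c * p.1 * p.2))
      ((gaussianReal mX vX).prod (gaussianReal mY vY)) := by
    rw [integrable_prod_iff (by fun_prop)]
    refine ⟨ae_of_all _ fun x => integrable_exp_mul_gaussianReal (c * x), ?_⟩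
    simp only [norm_eq_abs, abs_exp, hinner]
    exact integrable_exp_quadratic_gaussianReal mX vX (hvar ▸ hc) _
  rw [integral_prod _ hintegrable]
  simp only [hinner]
  rw [integral_exp_quadratic_gaussianReal mX vX (hvar ▸ hc), hvar]
  ring_nf

theorem mgf_mul_of_indepFun_gaussianReal {Ω : Type*} [MeasurableSpace Ω] {P : Measure Ω}
    [IsFiniteMeasure P] {X Y : Ω → ℝ} (hXY : IndepFun X Y P) {mX mY : ℝ} {vX vY : ℝ≥0}
    (hX : P.map X = gaussianReal mX vX) (hY : P.map Y = gaussianReal mY vY) {c : ℝ}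
    (hc : c ^ 2 * vX * vY < 1) :
    mgf (fun ω => X ω * Y ω) P c
      = exp ((c * mX * mY + c ^ 2 * (mX ^ 2 * vY + mY ^ 2 * vX) / 2) / (1 - c ^ 2 * vX * vY))
        / √(1 - c ^ 2 * vX * vY) := by
  have hXm : AEMeasurable X P := aemeasurable_of_map_neZero (by rw [hX]; infer_instance)
  have hYm : AEMeasurable Y P := aemeasurable_of_map_neZero (by rw [hY]; infer_instance)
  rw [← integral_exp_mul_mul_gaussianReal_prod mX mY vX vY hc, ← hX, ← hY,
    ← hXY.map_prod_eq_prod_map_map hXm hYm, integral_map (hXm.prodMk hYm) (by fun_prop), mgf]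
  simp only [mul_assoc]

/-- Moment generating function of the standardized product of two independent normal
random variables. -/
theorem mgf_standardized_product_of_normals
    {Ω : Type*} [MeasurableSpace Ω] (P : Measure Ω) [IsProbabilityMeasure P]
    (X Y : Ω → ℝ) (hXY : IndepFun X Y P)
    (mX mY σX σY : ℝ) (hσX : 0 < σX) (hσY : 0 < σY)
    (hX : Measure.map X P = gaussianReal mX ⟨σX ^ 2, sq_nonneg σX⟩)
    (hY : Measure.map Y P = gaussianReal mY ⟨σY ^ 2, sq_nonneg σY⟩)
    (ρX ρY σZ : ℝ) (hρX : ρX = mX / σX) (hρY : ρY = mY / σY)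
    (hσZ : σZ = Real.sqrt (1 + ρX ^ 2 + ρY ^ 2))
    (t : ℝ) (ht : |t| < σZ) (α : ℝ) (hα : α = t / σZ) :
    mgf (fun ω => (X ω * Y ω / (σX * σY) - ρX * ρY) / σZ) P t
      = Real.exp (((ρX ^ 2 + ρY ^ 2) * α ^ 2 + 2 * ρX * ρY * α ^ 3)
            / (2 * (1 - α ^ 2)))
        / Real.sqrt (1 - α ^ 2) := by
  obtain ⟨vX, hvX, hX⟩ : ∃ v : ℝ≥0, (v : ℝ) = σX ^ 2 ∧ P.map X = gaussianReal mX v := ⟨_, rfl, hX⟩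
  obtain ⟨vY, hvY, hY⟩ : ∃ v : ℝ≥0, (v : ℝ) = σY ^ 2 ∧ P.map Y = gaussianReal mY v := ⟨_, rfl, hY⟩
  have hσZ0 : 0 < σZ := hσZ ▸ sqrt_pos.2 (by positivity)
  obtain rfl : t = α * σZ := by rw [hα]; field_simp
  obtain rfl : mX = ρX * σX := by rw [hρX]; field_simp
  obtain rfl : mY = ρY * σY := by rw [hρY]; field_simp
  have hα1 : α ^ 2 < 1 := by
    rw [abs_mul, abs_of_pos hσZ0, mul_lt_iff_lt_one_left hσZ0] at ht
    exact (sq_lt_one_iff_abs_lt_one α).2 ht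
  have hvar : (α / (σX * σY)) ^ 2 * vX * vY = α ^ 2 := by
    rw [hvX, hvY]
    field_simp
  have hZ : (fun ω => (X ω * Y ω / (σX * σY) - ρX * ρY) / σZ)
      = fun ω => (σX * σY * σZ)⁻¹ * (X ω * Y ω) + -(ρX * ρY / σZ) := by
    funext ω
    field_simp
    ring
  have hw : 1 - α ^ 2 ≠ 0 := by linarith
  rw [hZ, mgf_add_const, mgf_const_mul, show (σX * σY * σZ)⁻¹ * (α * σZ) = α / (σX * σY) by
    field_simp, mgf_mul_of_indepFun_gaussianReal hXY hX hY (hvar ▸ hα1), hvar,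
    div_mul_eq_mul_div, ← exp_add]
  congr 2
  rw [hvX, hvY, div_add' _ _ _ hw, div_eq_div_iff hw (mul_ne_zero two_ne_zero hw)]
  field_simp
  ring
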